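/- Every freshness environment ∇ reduces under ⟹* to a unique reduced freshness environment nf(∇), its normal form. -/

import Mathlib

/-!
Reducing each assertion `a ≉ t` on its own, by structural recursion on `t`, gives a reduced
environment `nf ∇`. Every rule of `⟹` only unfolds one assertion along that recursion, so
`nf` is invariant under `⟹*`; and `nf ∇ = ∇` for reduced `∇`. Hence every reduced `∇'` with
`∇ ⟹* ∇'` equals `nf ∇`. One exists because a non-reduced environment always admits a step,
and each step strictly decreases the total size of the terms in the environment.
-/

set_option maxHeartbeats 1000000

/-- Atoms: a countably infinite set. -/
abbrev Atom : Type := ℕ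

/-- The subgroup of `Equiv.Perm Atom` consisting of the finite permutations,
i.e. those moving only finitely many atoms. -/
def finPermSubgroup : Subgroup (Equiv.Perm Atom) where
  carrier := {π : Equiv.Perm Atom | {a : Atom | π a ≠ a}.Finite}
  one_mem' := by
    have h : {a : Atom | (1 : Equiv.Perm Atom) a ≠ a} = ∅ := by ext a; simp
    simp only [Set.mem_setOf_eq, h]
    exact Set.finite_empty
  mul_mem' := by
    intro π σ hπ hσ
    refine (hπ.union hσ).subset ?_
    intro a ha
    simp only [Set.mem_setOf_eq, Equiv.Perm.mul_apply] at ha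
    by_cases h : σ a = a
    · exact Or.inl (by simp only [Set.mem_setOf_eq]; rwa [h] at ha)
    · exact Or.inr h
  inv_mem' := by
    intro π hπ
    refine (hπ.image (⇑π⁻¹)).subset ?_
    intro a ha
    simp only [Set.mem_setOf_eq] at ha
    have h1 : π a ≠ a := by
      intro h
      apply ha
      conv_lhs => rw [← h]
      simp
    exact ⟨π a, fun h => h1 (π.injective h), by simp⟩

/-- Finite permutations of atoms. -/
abbrev FinPerm : Type := finPermSubgroup

/-- The transposition of two atoms, as a finite permutation. -/
def swapPerm (a b : Atom) : FinPerm :=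
  ⟨Equiv.swap a b, by
    refine ((Set.finite_singleton b).insert a).subset ?_
    intro x hx
    simp only [Set.mem_setOf_eq] at hx
    by_contra h
    simp only [Set.mem_insert_iff, Set.mem_singleton_iff, not_or] at h
    exact hx (Equiv.swap_apply_of_ne_of_ne h.1 h.2)⟩

/-- Raw terms over a nominal signature (with set of function symbols `F`) and a set `V`
of variables: variables, atoms, moderated terms (explicit permutations), atom
abstractions, (binary-encoded, with empty product `unit`) products, and data built
with function symbols. -/
inductive RawTerm (V F : Type) : Type
  | var : V → RawTerm V F
  | atom : Atom → RawTerm V F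
  | mod : FinPerm → RawTerm V F → RawTerm V F
  | abs : Atom → RawTerm V F → RawTerm V F
  | unit : RawTerm V F
  | pair : RawTerm V F → RawTerm V F → RawTerm V F
  | app : F → RawTerm V F → RawTerm V F

variable {V F : Type}

/-- The permutation action on raw terms: `π·x = x`, `π·a = π a`,
`π·(π₁·t) = (π ∘ π₁ ∘ π⁻¹)·(π·t)`, `π·[a]t = [π a](π·t)`, componentwise on products,
`π·f(t) = f(π·t)`. -/
def permTerm (π : FinPerm) : RawTerm V F → RawTerm V F
  | .var x => .var x
  | .atom a => .atom (π.1 a)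
  | .mod π₁ t => .mod (π * π₁ * π⁻¹) (permTerm π t)
  | .abs a t => .abs (π.1 a) (permTerm π t)
  | .unit => .unit
  | .pair t s => .pair (permTerm π t) (permTerm π s)
  | .app f t => .app f (permTerm π t)

attribute [local instance] Classical.propDecidable

/-- Simplification of freshness environments (finite sets of freshness assertions
`a ≉ t`): the rewrite relation `⟹` generated by the rules of
Definition "Simplification of freshness environments" (the selected assertion is
required not to occur in the remaining environment, as `⟹` rewrites sets). -/
inductive EStep : Finset (Atom × RawTerm V F) → Finset (Atom × RawTerm V F) → Prop
  | atom (a b : Atom) (E : Finset (Atom × RawTerm V F)) : a ≠ b →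
      (a, RawTerm.atom b) ∉ E →
      EStep (insert (a, RawTerm.atom b) E) E
  | mod (a : Atom) (π : FinPerm) (t : RawTerm V F) (E : Finset (Atom × RawTerm V F)) :
      (a, RawTerm.mod π t) ∉ E →
      EStep (insert (a, RawTerm.mod π t) E) (insert (π⁻¹.1 a, t) E)
  | abs_diff (a b : Atom) (t : RawTerm V F) (E : Finset (Atom × RawTerm V F)) :
      a ≠ b → (a, RawTerm.abs b t) ∉ E →
      EStep (insert (a, RawTerm.abs b t) E) (insert (a, t) E)
  | abs_same (a : Atom) (t : RawTerm V F) (E : Finset (Atom × RawTerm V F)) :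
      (a, RawTerm.abs a t) ∉ E →
      EStep (insert (a, RawTerm.abs a t) E) E
  | unit (a : Atom) (E : Finset (Atom × RawTerm V F)) :
      (a, RawTerm.unit) ∉ E →
      EStep (insert (a, (RawTerm.unit : RawTerm V F)) E) E
  | pair (a : Atom) (t s : RawTerm V F) (E : Finset (Atom × RawTerm V F)) :
      (a, RawTerm.pair t s) ∉ E →
      EStep (insert (a, RawTerm.pair t s) E) (insert (a, t) (insert (a, s) E))
  | app (a : Atom) (f : F) (t : RawTerm V F) (E : Finset (Atom × RawTerm V F)) :
      (a, RawTerm.app f t) ∉ E →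
      EStep (insert (a, RawTerm.app f t) E) (insert (a, t) E)

/-- A freshness assertion is reduced iff it is of the form `a ≉ a` or `a ≉ x` with `x`
a variable; an environment is reduced iff all its assertions are. -/
def ReducedEnv (E : Finset (Atom × RawTerm V F)) : Prop :=
  ∀ p ∈ E, (∃ a : Atom, p = (a, RawTerm.atom a)) ∨
    (∃ (a : Atom) (x : V), p = (a, RawTerm.var x))

namespace Relation

variable {α β : Type*} {r : α → α → Prop} {P : α → Prop}

theorem exists_reflTransGen_of_wellFounded (hwf : WellFounded (flip r))
    (hstep : ∀ x, ¬ P x → ∃ y, r x y) (x : α) : ∃ y, ReflTransGen r x y ∧ P y := by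
  induction x using hwf.induction with
  | _ x ih =>
    by_cases hx : P x
    · exact ⟨x, .refl, hx⟩
    · obtain ⟨y, hxy⟩ := hstep x hx
      obtain ⟨z, hyz, hz⟩ := ih y hxy
      exact ⟨z, .head hxy hyz, hz⟩

theorem ReflTransGen.eq_of_invariant (f : α → β) (hf : ∀ x y, r x y → f x = f y) {x y : α}
    (h : ReflTransGen r x y) : f x = f y := by
  simpa [reflTransGen_eq_self] using h.lift f hf

theorem existsUnique_reflTransGen_of_invariant (hwf : WellFounded (flip r))
    (hstep : ∀ x, ¬ P x → ∃ y, r x y) (nf : α → α) (hnf : ∀ x y, r x y → nf x = nf y)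
    (hfix : ∀ y, P y → nf y = y) (x : α) : ∃! y, ReflTransGen r x y ∧ P y := by
  obtain ⟨y, hxy, hy⟩ := exists_reflTransGen_of_wellFounded hwf hstep x
  refine ⟨y, ⟨hxy, hy⟩, fun z ⟨hxz, hz⟩ => ?_⟩
  rw [← hfix z hz, ← hfix y hy, ← hxz.eq_of_invariant nf hnf, hxy.eq_of_invariant nf hnf]

end Relation

namespace RawTerm

def size : RawTerm V F → ℕ
  | .var _ | .atom _ | .unit => 1
  | .mod _ t | .abs _ t | .app _ t => t.size + 1
  | .pair t s => t.size + s.size + 1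

noncomputable def freshNF : Atom → RawTerm V F → Finset (Atom × RawTerm V F)
  | a, .var x => {(a, .var x)}
  | a, .atom b => if a = b then {(a, .atom b)} else ∅
  | a, .mod π t => freshNF (π⁻¹.1 a) t
  | a, .abs b t => if a = b then ∅ else freshNF a t
  | _, .unit => ∅
  | a, .pair t s => freshNF a t ∪ freshNF a s
  | a, .app _ t => freshNF a t

end RawTerm

def envSize (E : Finset (Atom × RawTerm V F)) : ℕ := ∑ p ∈ E, p.2.size

noncomputable def envNF (E : Finset (Atom × RawTerm V F)) : Finset (Atom × RawTerm V F) :=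
  E.biUnion fun p => RawTerm.freshNF p.1 p.2

theorem envSize_insert_of_notMem {p : Atom × RawTerm V F} {E : Finset (Atom × RawTerm V F)}
    (h : p ∉ E) : envSize (insert p E) = p.2.size + envSize E :=
  Finset.sum_insert h

theorem envSize_insert_le (p : Atom × RawTerm V F) (E : Finset (Atom × RawTerm V F)) :
    envSize (insert p E) ≤ p.2.size + envSize E := by
  by_cases h : p ∈ E
  · rw [Finset.insert_eq_of_mem h]
    exact Nat.le_add_left _ _
  · exact (envSize_insert_of_notMem h).le

theorem EStep.envSize_lt {E E' : Finset (Atom × RawTerm V F)} (h : EStep E E') :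
    envSize E' < envSize E := by
  cases h with
  | atom _ _ _ _ h | abs_same _ _ _ h | unit _ _ h =>
    rw [envSize_insert_of_notMem h]
    simp [RawTerm.size]
  | mod _ _ _ _ h | abs_diff _ _ _ _ _ h | app _ _ _ _ h =>
    rw [envSize_insert_of_notMem h]
    grw [envSize_insert_le]
    simp only [RawTerm.size]
    omega
  | pair _ _ _ _ h =>
    rw [envSize_insert_of_notMem h]
    grw [envSize_insert_le, envSize_insert_le]
    simp only [RawTerm.size]
    omega

theorem wellFounded_flip_eStep : WellFounded (flip (EStep (V := V) (F := F))) :=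
  Subrelation.wf (fun h => h.envSize_lt) (InvImage.wf envSize wellFounded_lt)

theorem exists_eStep_of_not_reducedEnv {E : Finset (Atom × RawTerm V F)} (h : ¬ ReducedEnv E) :
    ∃ E', EStep E E' := by
  simp only [ReducedEnv, not_forall, not_or, not_exists] at h
  obtain ⟨⟨a, t⟩, hp, hatom, hvar⟩ := h
  rw [← Finset.insert_erase hp]
  have hnotMem : (a, t) ∉ E.erase (a, t) := Finset.notMem_erase _ _
  cases t with
  | var x => exact absurd rfl (hvar a x)
  | atom b => exact ⟨_, .atom a b _ (fun hab => hatom a (by rw [hab])) hnotMem⟩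
  | mod π t => exact ⟨_, .mod a π t _ hnotMem⟩
  | abs b t =>
    by_cases hab : a = b
    · subst hab
      exact ⟨_, .abs_same a t _ hnotMem⟩
    · exact ⟨_, .abs_diff a b t _ hab hnotMem⟩
  | unit => exact ⟨_, .unit a _ hnotMem⟩
  | pair t s => exact ⟨_, .pair a t s _ hnotMem⟩
  | app f t => exact ⟨_, .app a f t _ hnotMem⟩

theorem envNF_insert (p : Atom × RawTerm V F) (E : Finset (Atom × RawTerm V F)) :
    envNF (insert p E) = RawTerm.freshNF p.1 p.2 ∪ envNF E :=
  Finset.biUnion_insert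

theorem EStep.envNF_eq {E E' : Finset (Atom × RawTerm V F)} (h : EStep E E') :
    envNF E = envNF E' := by
  cases h <;> simp [envNF_insert, RawTerm.freshNF, Finset.union_assoc, *]

theorem envNF_of_reducedEnv {E : Finset (Atom × RawTerm V F)} (h : ReducedEnv E) :
    envNF E = E := by
  have hsingleton : ∀ p ∈ E, RawTerm.freshNF p.1 p.2 = {p} := by
    intro p hp
    rcases h p hp with ⟨a, rfl⟩ | ⟨a, x, rfl⟩ <;> simp [RawTerm.freshNF]
  rw [envNF, Finset.biUnion_congr rfl hsingleton, Finset.biUnion_singleton_eq_self]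

/-- Every freshness environment reduces under `⟹*` to a unique
reduced freshness environment, its normal form. -/
theorem unique_normal_form (V F : Type) (E : Finset (Atom × RawTerm V F)) :
    ∃! E' : Finset (Atom × RawTerm V F),
      Relation.ReflTransGen EStep E E' ∧ ReducedEnv E' :=
  Relation.existsUnique_reflTransGen_of_invariant wellFounded_flip_eStep
    (fun _ => exists_eStep_of_not_reducedEnv) envNF (fun _ _ => EStep.envNF_eq)
    (fun _ => envNF_of_reducedEnv) E
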